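/- arXiv:2303.13084 — 2 statements merged into one kernel-verified Lean document; each statement's English description precedes it below -/
import Mathlib

section
/- Let P ⊆ ℝ^d be a full-dimensional lattice polytope with codegree a satisfying P = ⌊aP⌋ + {P}. Then there exists an integer K ≥ 1 (depending on P) such that for all integers k ≥ K, the dilated polytope kP is nearly Gorenstein. -/
open Set Pointwise

/-- The set of lattice points of `ℝ^d`. -/
def latticePoints (d : ℕ) : Set (Fin d → ℝ) :=
  {x | ∀ i, ∃ z : ℤ, x i = (z : ℝ)}

/-- A lattice polytope: the convex hull of a finite set of lattice points. -/
def IsLatticePolytope {d : ℕ} (P : Set (Fin d → ℝ)) : Prop :=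
  ∃ V : Finset (Fin d → ℝ), (V : Set (Fin d → ℝ)) ⊆ latticePoints d ∧
    P = convexHull ℝ (V : Set (Fin d → ℝ))

/-- The natural pairing of an integral linear functional with a point of `ℝ^d`. -/
def pairing {d : ℕ} (n : Fin d → ℤ) (x : Fin d → ℝ) : ℝ :=
  ∑ i, (n i : ℝ) * x i

/-- `P = {x | n_F(x) ≥ -h_F}` is an irredundant presentation with primitive
integral inner normals, i.e. the facet presentation of `P`. -/
def IsFacetPresentation {d m : ℕ} (P : Set (Fin d → ℝ))
    (n : Fin m → Fin d → ℤ) (h : Fin m → ℤ) : Prop :=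
  P = {x | ∀ i, pairing (n i) x ≥ -(h i : ℝ)} ∧
  (∀ i, Finset.univ.gcd (n i) = 1) ∧
  (∀ i, ∃ x : Fin d → ℝ, pairing (n i) x < -(h i : ℝ) ∧
    ∀ j, j ≠ i → pairing (n j) x ≥ -(h j : ℝ))

/-- `a` is the codegree of `P`: the least `k ≥ 1` such that `int(kP)` contains
a lattice point. -/
def IsCodegree {d : ℕ} (P : Set (Fin d → ℝ)) (a : ℕ) : Prop :=
  1 ≤ a ∧ (interior ((a : ℝ) • P) ∩ latticePoints d).Nonempty ∧
    ∀ k : ℕ, 1 ≤ k → (interior ((k : ℝ) • P) ∩ latticePoints d).Nonempty → a ≤ k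

/-- The floor polytope `⌊R⌋ = conv(int(R) ∩ ℤ^d)`. -/
def floorPoly {d : ℕ} (R : Set (Fin d → ℝ)) : Set (Fin d → ℝ) :=
  convexHull ℝ (interior R ∩ latticePoints d)

/-- The remainder polytope `{P} = conv{x ∈ ℤ^d | n_F(x) ≥ (a-1)h_F - 1}`,
defined in terms of the facet presentation data and the codegree `a`. -/
def remPoly {d m : ℕ} (n : Fin m → Fin d → ℤ) (h : Fin m → ℤ) (a : ℕ) :
    Set (Fin d → ℝ) :=
  convexHull ℝ {x | x ∈ latticePoints d ∧
    ∀ i, pairing (n i) x ≥ ((a : ℝ) - 1) * (h i : ℝ) - 1}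

/-- The cone `C_P ⊆ ℝ^d × ℝ` over `P`, in terms of the facet presentation. -/
def coneOver {d m : ℕ} (n : Fin m → Fin d → ℤ) (h : Fin m → ℤ) :
    Set ((Fin d → ℝ) × ℝ) :=
  {p | ∀ i, pairing (n i) p.1 ≥ -(p.2 * (h i : ℝ))}

/-- The interior `int(C_P)` of the cone over `P`. -/
def intCone {d m : ℕ} (n : Fin m → Fin d → ℤ) (h : Fin m → ℤ) :
    Set ((Fin d → ℝ) × ℝ) :=
  {p | ∀ i, pairing (n i) p.1 > -(p.2 * (h i : ℝ))}

/-- The anticanonical set `ant(C_P)` of the cone over `P`. -/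
def antCone {d m : ℕ} (n : Fin m → Fin d → ℤ) (h : Fin m → ℤ) :
    Set ((Fin d → ℝ) × ℝ) :=
  {p | ∀ i, pairing (n i) p.1 ≥ -(p.2 * (h i : ℝ)) - 1}

/-- Lattice points of `ℝ^d × ℝ = ℝ^{d+1}`. -/
def latticePairs (d : ℕ) : Set ((Fin d → ℝ) × ℝ) :=
  {p | p.1 ∈ latticePoints d ∧ ∃ z : ℤ, p.2 = (z : ℝ)}

/-- The nearly Gorenstein condition with respect to a given facet presentation:
`(C_P ∩ ℤ^{d+1}) \ {0} ⊆ (int(C_P) ∩ ℤ^{d+1}) + (ant(C_P) ∩ ℤ^{d+1})`. -/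
def NGIncl {d m : ℕ} (n : Fin m → Fin d → ℤ) (h : Fin m → ℤ) : Prop :=
  (coneOver n h ∩ latticePairs d) \ {(0 : (Fin d → ℝ) × ℝ)} ⊆
    (intCone n h ∩ latticePairs d) + (antCone n h ∩ latticePairs d)

/-- A full-dimensional lattice polytope is nearly Gorenstein if the nearly
Gorenstein inclusion holds for its facet presentation. -/
def NearlyGorenstein {d : ℕ} (P : Set (Fin d → ℝ)) : Prop :=
  ∃ (m : ℕ) (n : Fin m → Fin d → ℤ) (h : Fin m → ℤ),
    IsFacetPresentation P n h ∧ NGIncl n h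

/-- The polar dual `Q* = {y | y(x) ≥ -1 for all x ∈ Q}`. -/
def polarDual {d : ℕ} (Q : Set (Fin d → ℝ)) : Set (Fin d → ℝ) :=
  {y | ∀ x ∈ Q, (∑ i, y i * x i) ≥ -1}

/-- A reflexive polytope: a lattice polytope with `0` in its interior whose
polar dual is again a lattice polytope. -/
def IsReflexive {d : ℕ} (Q : Set (Fin d → ℝ)) : Prop :=
  IsLatticePolytope Q ∧ (0 : Fin d → ℝ) ∈ interior Q ∧
    IsLatticePolytope (polarDual Q)

/-- A Gorenstein polytope: some dilate `kP`, translated by a lattice vector,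
is reflexive. -/
def IsGorenstein {d : ℕ} (P : Set (Fin d → ℝ)) : Prop :=
  ∃ (k : ℕ) (w : Fin d → ℝ), 1 ≤ k ∧ w ∈ latticePoints d ∧
    IsReflexive ((fun x => x - w) '' ((k : ℝ) • P))

/-- The integer decomposition property. -/
def IsIDP {d : ℕ} (P : Set (Fin d → ℝ)) : Prop :=
  ∀ k : ℕ, 1 ≤ k → ∀ x ∈ ((k : ℝ) • P) ∩ latticePoints d,
    ∃ y : Fin k → Fin d → ℝ, (∀ j, y j ∈ P ∩ latticePoints d) ∧ x = ∑ j, y j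

/-- Minkowski indecomposability of a lattice polytope. -/
def IsIndecomposable {d : ℕ} (P : Set (Fin d → ℝ)) : Prop :=
  (¬ ∃ p : Fin d → ℝ, P = {p}) ∧
  ∀ P₁ P₂ : Set (Fin d → ℝ), IsLatticePolytope P₁ → IsLatticePolytope P₂ →
    P = P₁ + P₂ → (∃ p, P₁ = {p}) ∨ (∃ p, P₂ = {p})

/-- A `(0,1)`-polytope: the convex hull of a set of `(0,1)`-vectors. -/
def Is01Polytope {d : ℕ} (P : Set (Fin d → ℝ)) : Prop :=
  ∃ V : Finset (Fin d → ℝ), (∀ v ∈ V, ∀ i, v i = 0 ∨ v i = 1) ∧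
    P = convexHull ℝ (V : Set (Fin d → ℝ))

/-!
Write `P = {x | n_i(x) ≥ -h_i}`. Over every nonempty face `F_T` of `P` the decomposition
`P = ⌊aP⌋ + {P}` produces a lattice point `r_T` with `n_i(r_T) ≥ -1` for all `i`, with equality
for `i ∈ T`; that is, `(r_T, 0) ∈ ant(C_P)`. By compactness there is a uniform `ε > 0` such that
the facets on which a point of `P` is `ε`-close to tight always cut out a nonempty face. For a
lattice point `(x, N)` of `C_P` let `T` be the facets on which `x / N` is `ε`-close to tight; then
`(x, N) = (x - r_T, N) + (r_T, 0)` with `(x - r_T, N)` interior: on `T` because `n_i(r_T) = -1`,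
off `T` because the slack `ε N` exceeds the finitely many values `n_i(r_T)` once `N` is large.
Since `C_{kP}` at height `t` is `C_P` at height `t k`, this holds for all large `k`.
-/

open Filter Topology

section Pairing

variable {d : ℕ}

def pairingLinearMap (n : Fin d → ℤ) : (Fin d → ℝ) →ₗ[ℝ] ℝ where
  toFun := pairing n
  map_add' x y := by simp only [pairing, Pi.add_apply, mul_add, Finset.sum_add_distrib]
  map_smul' c x := by
    simp only [pairing, Pi.smul_apply, smul_eq_mul, RingHom.id_apply, Finset.mul_sum]
    exact Finset.sum_congr rfl fun _ _ => mul_left_comm _ _ _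

@[simp]
lemma pairingLinearMap_apply (n : Fin d → ℤ) (x : Fin d → ℝ) :
    pairingLinearMap n x = pairing n x := rfl

lemma pairing_add (n : Fin d → ℤ) (x y : Fin d → ℝ) :
    pairing n (x + y) = pairing n x + pairing n y :=
  (pairingLinearMap n).map_add x y

lemma pairing_sub (n : Fin d → ℤ) (x y : Fin d → ℝ) :
    pairing n (x - y) = pairing n x - pairing n y :=
  (pairingLinearMap n).map_sub x y

lemma pairing_smul (n : Fin d → ℤ) (c : ℝ) (x : Fin d → ℝ) :
    pairing n (c • x) = c * pairing n x :=
  (pairingLinearMap n).map_smul c x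

lemma continuous_pairing (n : Fin d → ℤ) : Continuous (pairing n) :=
  (pairingLinearMap n).continuous_of_finiteDimensional

lemma pairingLinearMap_surjective {n : Fin d → ℤ} (hn : n ≠ 0) :
    Function.Surjective (pairingLinearMap n) := by
  obtain ⟨j, hj⟩ := Function.ne_iff.1 hn
  intro t
  refine ⟨Pi.single j (t / n j), ?_⟩
  have hj' : (n j : ℝ) ≠ 0 := Int.cast_ne_zero.2 hj
  simp [pairing, Pi.single_apply, mul_div_cancel₀ _ hj']

lemma exists_pairing_eq_intCast (n : Fin d → ℤ) {x : Fin d → ℝ} (hx : x ∈ latticePoints d) :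
    ∃ z : ℤ, pairing n x = z := by
  choose y hy using hx
  exact ⟨∑ i, n i * y i, by simp [pairing, hy]⟩

lemma add_mem_latticePoints {x y : Fin d → ℝ} (hx : x ∈ latticePoints d)
    (hy : y ∈ latticePoints d) : x + y ∈ latticePoints d := fun i => by
  obtain ⟨a, ha⟩ := hx i
  obtain ⟨b, hb⟩ := hy i
  exact ⟨a + b, by simp [ha, hb]⟩

lemma sub_mem_latticePoints {x y : Fin d → ℝ} (hx : x ∈ latticePoints d)
    (hy : y ∈ latticePoints d) : x - y ∈ latticePoints d := fun i => by
  obtain ⟨a, ha⟩ := hx i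
  obtain ⟨b, hb⟩ := hy i
  exact ⟨a - b, by simp [ha, hb]⟩

lemma intCast_smul_mem_latticePoints (c : ℤ) {x : Fin d → ℝ} (hx : x ∈ latticePoints d) :
    (c : ℝ) • x ∈ latticePoints d := fun i => by
  obtain ⟨a, ha⟩ := hx i
  exact ⟨c * a, by simp [ha]⟩

end Pairing

section Halfspaces

variable {d m : ℕ}

lemma le_pairing_of_mem_convexHull {n : Fin d → ℤ} {c : ℝ} {S : Set (Fin d → ℝ)}
    (hS : ∀ s ∈ S, c ≤ pairing n s) {z : Fin d → ℝ} (hz : z ∈ convexHull ℝ S) :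
    c ≤ pairing n z :=
  convexHull_min hS (convex_halfSpace_ge (pairingLinearMap n).isLinear c) hz

/-- Minimum principle for the linear functional `∑ i ∈ T, pairing (n i)`, which is at least
`∑ i ∈ T, c i` on `S`. -/
lemma exists_mem_pairing_eq_of_mem_convexHull {n : Fin m → Fin d → ℤ} {c : Fin m → ℝ}
    {S : Set (Fin d → ℝ)} (hS : ∀ s ∈ S, ∀ i, c i ≤ pairing (n i) s) {z : Fin d → ℝ}
    (hz : z ∈ convexHull ℝ S) {T : Finset (Fin m)} (hzT : ∀ i ∈ T, pairing (n i) z ≤ c i) :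
    ∃ s ∈ S, ∀ i ∈ T, pairing (n i) s = c i := by
  obtain ⟨s, hs, hsz⟩ := ((∑ i ∈ T, pairingLinearMap (n i)).concaveOn
    (convex_convexHull ℝ S)).exists_le_of_mem_convexHull (subset_convexHull ℝ S) hz
  simp only [LinearMap.sum_apply, pairingLinearMap_apply] at hsz
  have hsum : ∑ i ∈ T, c i = ∑ i ∈ T, pairing (n i) s :=
    le_antisymm (Finset.sum_le_sum fun i _ => hS s hs i) (hsz.trans (Finset.sum_le_sum hzT))
  exact ⟨s, hs, fun i hi =>
    ((Finset.sum_eq_sum_iff_of_le fun i _ => hS s hs i).1 hsum i hi).symm⟩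

lemma lt_pairing_of_mem_interior {n : Fin d → ℤ} (hn : n ≠ 0) {c : ℝ} {y : Fin d → ℝ}
    (hy : y ∈ interior {x | c ≤ pairing n x}) : c < pairing n y := by
  have hopen := (pairingLinearMap n).isOpenMap_of_finiteDimensional
    (pairingLinearMap_surjective hn)
  rwa [show {x | c ≤ pairing n x} = pairingLinearMap n ⁻¹' Ici c from rfl,
    ← hopen.preimage_interior_eq_interior_preimage (continuous_pairing n), interior_Ici] at hy

lemma smul_setOf_pairing_ge (n : Fin m → Fin d → ℤ) (c : Fin m → ℝ) {r : ℝ} (hr : 0 < r) :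
    r • {x | ∀ i, pairing (n i) x ≥ -c i} = {x | ∀ i, pairing (n i) x ≥ -(r * c i)} := by
  ext x
  simp only [mem_smul_set_iff_inv_smul_mem₀ hr.ne', mem_ofPred_eq, pairing_smul, ge_iff_le,
    le_inv_mul_iff₀ hr, mul_neg]

end Halfspaces

section FacetPresentation

variable {d m : ℕ} {P : Set (Fin d → ℝ)} {n : Fin m → Fin d → ℤ} {h : Fin m → ℤ}

lemma IsFacetPresentation.normal_ne_zero (hpres : IsFacetPresentation P n h) (i : Fin m) :
    n i ≠ 0 := by
  intro hi
  have := hpres.2.1 i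
  rw [Finset.gcd_eq_zero_iff.2 fun j _ => by rw [hi]; rfl] at this
  exact zero_ne_one this

lemma IsFacetPresentation.smul (hpres : IsFacetPresentation P n h) {k : ℕ} (hk : 0 < k) :
    IsFacetPresentation ((k : ℝ) • P) n (fun i => (k : ℤ) * h i) := by
  obtain ⟨hP, hgcd, hirr⟩ := hpres
  have hkR : (0 : ℝ) < k := Nat.cast_pos.2 hk
  refine ⟨?_, hgcd, fun i => ?_⟩
  · rw [hP, smul_setOf_pairing_ge _ _ hkR]
    push_cast
    rfl
  · obtain ⟨x, hxi, hxj⟩ := hirr i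
    refine ⟨(k : ℝ) • x, ?_, fun j hj => ?_⟩
    · rw [pairing_smul]
      push_cast
      nlinarith
    · rw [pairing_smul]
      push_cast
      nlinarith [hxj j hj]

lemma IsFacetPresentation.le_pairing_of_mem_floorPoly (hpres : IsFacetPresentation P n h)
    {y : Fin d → ℝ} (hy : y ∈ floorPoly P) (i : Fin m) : 1 - (h i : ℝ) ≤ pairing (n i) y := by
  refine le_pairing_of_mem_convexHull (fun s hs => ?_) hy
  obtain ⟨hs, hlat⟩ := hs
  rw [hpres.1] at hs
  have hsub : {x | ∀ j, pairing (n j) x ≥ -(h j : ℝ)} ⊆ {x | -(h i : ℝ) ≤ pairing (n i) x} :=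
    fun x hx => hx i
  have hlt := lt_pairing_of_mem_interior (hpres.normal_ne_zero i) (interior_mono hsub hs)
  obtain ⟨z, hz⟩ := exists_pairing_eq_intCast (n i) hlat
  rw [hz] at hlt ⊢
  have hlt' : -h i < z := by exact_mod_cast hlt
  exact_mod_cast (by omega : 1 - h i ≤ z)

end FacetPresentation

lemma eq_zero_of_forall_add_smul_mem {E : Type*} [NormedAddCommGroup E] [NormedSpace ℝ E]
    {B : Set E} (hB : Bornology.IsBounded B) {p u : E} (h : ∀ t : ℝ, 0 ≤ t → p + t • u ∈ B) :
    u = 0 := by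
  obtain ⟨C, hC⟩ := hB.exists_norm_le
  by_contra hu
  have hu' : 0 < ‖u‖ := norm_pos_iff.2 hu
  have hC0 : 0 ≤ C := (norm_nonneg _).trans (hC _ (by simpa using h 0 le_rfl))
  set t := (C + ‖p‖ + 1) / ‖u‖
  have ht : 0 ≤ t := by positivity
  have htu : ‖t • u‖ = C + ‖p‖ + 1 := by
    rw [norm_smul, Real.norm_of_nonneg ht, div_mul_cancel₀ _ hu'.ne']
  have := norm_sub_le (p + t • u) p
  rw [add_sub_cancel_left, htu] at this
  linarith [hC _ (h t ht)]

lemma nontrivial_of_nonempty_interior {E : Type*} [NormedAddCommGroup E] [NormedSpace ℝ E]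
    [Nontrivial E] {s : Set E} (hs : (interior s).Nonempty) : s.Nontrivial := by
  obtain ⟨x, hx⟩ := hs
  rcases eq_singleton_or_nontrivial (interior_subset hx) with rfl | h
  · rw [interior_singleton] at hx
    exact hx.elim
  · exact h

lemma IsLatticePolytope.isCompact {d : ℕ} {P : Set (Fin d → ℝ)} (hP : IsLatticePolytope P) :
    IsCompact P := by
  obtain ⟨V, -, rfl⟩ := hP
  exact V.finite_toSet.isCompact_convexHull (𝕜 := ℝ)

section Cone

variable {d m : ℕ} {P : Set (Fin d → ℝ)} {n : Fin m → Fin d → ℤ} {h : Fin m → ℤ}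

/-- At height `t ≤ 0`, `p.1 - t • q` is a recession direction of `P` for every `q ∈ P`. -/
lemma pos_of_mem_coneOver (hP : P = {x | ∀ i, pairing (n i) x ≥ -(h i : ℝ)})
    (hbdd : Bornology.IsBounded P) (hnt : P.Nontrivial) {p : (Fin d → ℝ) × ℝ}
    (hp : p ∈ coneOver n h) (hp0 : p ≠ 0) : 0 < p.2 := by
  by_contra! ht
  have hline : ∀ q ∈ P, p.1 = p.2 • q := by
    intro q hq
    rw [← sub_eq_zero]
    refine eq_zero_of_forall_add_smul_mem hbdd (p := q) fun s hs => ?_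
    rw [hP] at hq ⊢
    intro i
    have hpi : pairing (n i) p.1 ≥ -(p.2 * h i) := hp i
    have hqi := hq i
    have hdir : 0 ≤ pairing (n i) p.1 - p.2 * pairing (n i) q := by nlinarith
    rw [pairing_add, pairing_smul, pairing_sub, pairing_smul]
    nlinarith [mul_nonneg hs hdir]
  obtain ⟨q₁, hq₁, q₂, hq₂, hne⟩ := hnt
  have h2 : p.2 = 0 := by
    by_contra h2
    exact hne (smul_right_injective _ h2 ((hline q₁ hq₁).symm.trans (hline q₂ hq₂)))
  exact hp0 (Prod.ext (by simpa [h2] using hline q₁ hq₁) h2)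

end Cone

/-- Without a common zero in `K`, `∑ i ∈ T, g i` is bounded below on `K` by some `δ > 0`. -/
lemma eventually_exists_common_zero {X ι : Type*} [TopologicalSpace X] {K : Set X}
    (hK : IsCompact K) (T : Finset ι) {g : ι → X → ℝ} (hg : ∀ i ∈ T, Continuous (g i))
    (hg0 : ∀ i ∈ T, ∀ z ∈ K, 0 ≤ g i z) :
    ∀ᶠ ε in 𝓝 (0 : ℝ), ∀ z ∈ K, (∀ i ∈ T, g i z < ε) → ∃ z' ∈ K, ∀ i ∈ T, g i z' = 0 := by
  by_cases hzero : ∃ z' ∈ K, ∀ i ∈ T, g i z' = 0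
  · exact Eventually.of_forall fun _ _ _ _ => hzero
  push Not at hzero
  have hpos : ∀ z ∈ K, 0 < ∑ i ∈ T, g i z := fun z hz => by
    obtain ⟨i, hi, hne⟩ := hzero z hz
    exact Finset.sum_pos' (fun j hj => hg0 j hj z hz) ⟨i, hi, (hg0 i hi z hz).lt_of_ne' hne⟩
  obtain ⟨δ, hδ, hδK⟩ :=
    hK.exists_forall_le' (continuous_finsetSum T hg).continuousOn hpos
  filter_upwards [eventually_lt_nhds (show (0 : ℝ) < δ / (T.card + 1) by positivity)]
    with ε hε z hz hlt
  have hsum : ∑ i ∈ T, g i z ≤ T.card * ε := by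
    simpa using Finset.sum_le_card_nsmul T (g · z) ε fun i hi => (hlt i hi).le
  have hcard : (T.card : ℝ) * (δ / (T.card + 1)) < δ := by
    rw [mul_div_assoc', div_lt_iff₀ (by positivity)]
    linarith
  have := mul_le_mul_of_nonneg_left hε.le (Nat.cast_nonneg T.card)
  linarith [hδK z hz]

lemma IsFacetPresentation.exists_face_margin {d m : ℕ} {P : Set (Fin d → ℝ)}
    {n : Fin m → Fin d → ℤ} {h : Fin m → ℤ} (hpres : IsFacetPresentation P n h)
    (hcpt : IsCompact P) :
    ∃ ε > 0, ∀ T : Finset (Fin m), ∀ z ∈ P, (∀ i ∈ T, pairing (n i) z + h i < ε) →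
      ∃ z' ∈ P, ∀ i ∈ T, pairing (n i) z' = -h i := by
  have hT := fun T => eventually_exists_common_zero hcpt T
    (g := fun i z => pairing (n i) z + h i) (fun i _ => (continuous_pairing _).add continuous_const)
    fun i _ z hz => by rw [hpres.1] at hz; linarith [hz i]
  obtain ⟨ε, hε, hεpos⟩ :=
    ((eventually_all.2 hT).filter_mono nhdsWithin_le_nhds |>.and self_mem_nhdsWithin).exists
      (f := 𝓝[>] (0 : ℝ))
  refine ⟨ε, hεpos, fun T z hz hzT => ?_⟩
  obtain ⟨z', hz', hz'T⟩ := hε T z hz hzT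
  exact ⟨z', hz', fun i hi => eq_neg_of_add_eq_zero_left (hz'T i hi)⟩

section Decomposition

variable {d m : ℕ} {P : Set (Fin d → ℝ)} {n : Fin m → Fin d → ℤ} {h : Fin m → ℤ} {a : ℕ}

/-- Split `z = f + w₀ ∈ ⌊aP⌋ + {P}`: since `n_i(f) ≥ 1 - a h_i`, `w₀` lies on the faces
`n_i = (a - 1) h_i - 1` (`i ∈ T`) of `{P}`, hence so does a lattice point `w`; take
`r = w + (a - 1) v` for a vertex `v` of `P` on `F_T`. -/
lemma exists_latticePoint_pairing_eq_neg_one (hP : IsLatticePolytope P)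
    (hpres : IsFacetPresentation P n h) (ha : 1 ≤ a)
    (hdecomp : P = floorPoly ((a : ℝ) • P) + remPoly n h a) {T : Finset (Fin m)}
    {z : Fin d → ℝ} (hz : z ∈ P) (hzT : ∀ i ∈ T, pairing (n i) z = -h i) :
    ∃ r ∈ latticePoints d, (∀ i, -1 ≤ pairing (n i) r) ∧ ∀ i ∈ T, pairing (n i) r = -1 := by
  obtain ⟨V, hVlat, hPV⟩ := hP
  have hVP : ∀ v ∈ (V : Set (Fin d → ℝ)), ∀ i, -(h i : ℝ) ≤ pairing (n i) v := fun v hv => by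
    have hv : v ∈ P := hPV ▸ subset_convexHull ℝ _ hv
    rwa [hpres.1] at hv
  obtain ⟨v, hvV, hvT⟩ :=
    exists_mem_pairing_eq_of_mem_convexHull hVP (hPV ▸ hz) fun i hi => (hzT i hi).le
  obtain ⟨f, hf, w₀, hw₀, rfl⟩ := mem_add.1 (hdecomp ▸ hz)
  have hfloor := (hpres.smul ha).le_pairing_of_mem_floorPoly hf
  obtain ⟨w, ⟨hwlat, hw⟩, hwT⟩ := exists_mem_pairing_eq_of_mem_convexHull
    (c := fun i => ((a : ℝ) - 1) * h i - 1) (fun s hs => hs.2) hw₀ fun i hi => by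
      have hfi := hfloor i
      have hzi := hzT i hi
      rw [pairing_add] at hzi
      push_cast at hfi
      linarith
  refine ⟨w + ((a - 1 : ℤ) : ℝ) • v,
    add_mem_latticePoints hwlat (intCast_smul_mem_latticePoints _ (hVlat hvV)),
    fun i => ?_, fun i hi => ?_⟩
  · have ha' : (0 : ℝ) ≤ a - 1 := by simp [ha]
    rw [pairing_add, pairing_smul]
    push_cast
    nlinarith [hw i, hVP v hvV i]
  · rw [pairing_add, pairing_smul, hwT i hi, hvT i hi]
    push_cast
    ring

end Decomposition

section NearlyGorenstein

variable {d m : ℕ} {P : Set (Fin d → ℝ)} {n : Fin m → Fin d → ℤ} {h : Fin m → ℤ}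

lemma exists_mem_face_of_mem_coneOver (hpres : IsFacetPresentation P n h) {ε : ℝ}
    (hface : ∀ T : Finset (Fin m), ∀ z ∈ P, (∀ i ∈ T, pairing (n i) z + h i < ε) →
      ∃ z' ∈ P, ∀ i ∈ T, pairing (n i) z' = -h i)
    {x : Fin d → ℝ} {N : ℝ} (hN : 0 < N) (hxN : (x, N) ∈ coneOver n h) (T : Finset (Fin m))
    (hT : ∀ i ∈ T, pairing (n i) x + N * h i < ε * N) :
    ∃ z ∈ P, ∀ i ∈ T, pairing (n i) z = -h i := by
  have hslack : ∀ i, pairing (n i) (N⁻¹ • x) + h i = N⁻¹ * (pairing (n i) x + N * h i) := by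
    intro i
    rw [pairing_smul]
    field_simp
  refine hface T (N⁻¹ • x) ?_ fun i hi => ?_
  · rw [hpres.1]
    intro i
    have hxi : pairing (n i) x ≥ -(N * h i) := hxN i
    have := mul_nonneg (inv_nonneg.2 hN.le) (show 0 ≤ pairing (n i) x + N * h i by linarith)
    linarith [hslack i]
  · rw [hslack i, inv_mul_lt_iff₀ hN]
    linarith [hT i hi]

lemma exists_height_bound_interior_split (hpres : IsFacetPresentation P n h)
    (hcpt : IsCompact P)
    (htight : ∀ T : Finset (Fin m), ∀ z ∈ P, (∀ i ∈ T, pairing (n i) z = -h i) →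
      ∃ r ∈ latticePoints d, (∀ i, -1 ≤ pairing (n i) r) ∧ ∀ i ∈ T, pairing (n i) r = -1) :
    ∃ K : ℕ, 1 ≤ K ∧ ∀ x ∈ latticePoints d, ∀ N : ℝ, K ≤ N → (x, N) ∈ coneOver n h →
      ∃ r ∈ latticePoints d, (∀ i, -1 ≤ pairing (n i) r) ∧
        ∀ i, -(N * h i) < pairing (n i) (x - r) := by
  obtain ⟨ε, hε, hface⟩ := hpres.exists_face_margin hcpt
  have hr : ∀ T : Finset (Fin m), ∃ r : Fin d → ℝ, (∃ z ∈ P, ∀ i ∈ T, pairing (n i) z = -h i) →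
      r ∈ latticePoints d ∧ (∀ i, -1 ≤ pairing (n i) r) ∧ ∀ i ∈ T, pairing (n i) r = -1 := by
    intro T
    by_cases hT : ∃ z ∈ P, ∀ i ∈ T, pairing (n i) z = -h i
    · obtain ⟨z, hz, hzT⟩ := hT
      obtain ⟨r, hr⟩ := htight T z hz hzT
      exact ⟨r, fun _ => hr⟩
    · exact ⟨0, fun hT' => (hT hT').elim⟩
  choose r hr using hr
  obtain ⟨B, hB⟩ := Finite.bddAbove_range fun Ti : Finset (Fin m) × Fin m =>
    pairing (n Ti.2) (r Ti.1)
  obtain ⟨K, hK⟩ := exists_nat_gt (max (B / ε) 0)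
  refine ⟨K, by exact_mod_cast (le_max_right _ _).trans_lt hK, fun x hx N hN hxN => ?_⟩
  have hNpos : 0 < N := ((le_max_right _ _).trans_lt hK).trans_le hN
  have hBN : B < ε * N := by
    have := ((le_max_left _ _).trans_lt hK).trans_le hN
    rwa [div_lt_iff₀' hε] at this
  set T := Finset.univ.filter fun i => pairing (n i) x + N * h i < ε * N
  have hxT : ∃ z ∈ P, ∀ i ∈ T, pairing (n i) z = -h i :=
    exists_mem_face_of_mem_coneOver hpres hface hNpos hxN T fun i hi => (Finset.mem_filter.1 hi).2
  obtain ⟨hrlat, hrant, hrT⟩ := hr T hxT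
  refine ⟨r T, hrlat, hrant, fun i => ?_⟩
  have hxi : pairing (n i) x ≥ -(N * h i) := hxN i
  rw [pairing_sub]
  by_cases hi : i ∈ T
  · rw [hrT i hi]
    linarith
  · have hiT : ε * N ≤ pairing (n i) x + N * h i := by simpa [T] using hi
    linarith [hB ⟨(T, i), rfl⟩]

lemma ngIncl_smul_of_height_bound (hP : P = {x | ∀ i, pairing (n i) x ≥ -(h i : ℝ)})
    (hbdd : Bornology.IsBounded P) (hnt : P.Nontrivial) {K : ℕ}
    (hK : ∀ x ∈ latticePoints d, ∀ N : ℝ, K ≤ N → (x, N) ∈ coneOver n h →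
      ∃ r ∈ latticePoints d, (∀ i, -1 ≤ pairing (n i) r) ∧
        ∀ i, -(N * h i) < pairing (n i) (x - r))
    {k : ℕ} (hk0 : 0 < k) (hk : K ≤ k) : NGIncl n (fun i => (k : ℤ) * h i) := by
  rintro p ⟨⟨hpC, hpx, t, ht⟩, hp0⟩
  have hpC' : (p.1, p.2 * k) ∈ coneOver n h := fun i => by
    have := hpC i
    push_cast at this
    simp only
    linarith
  have hkR : (0 : ℝ) < k := Nat.cast_pos.2 hk0
  have hpos : 0 < p.2 * k := pos_of_mem_coneOver hP hbdd hnt hpC' fun h0 => by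
    obtain ⟨h1, h2⟩ := Prod.ext_iff.1 h0
    exact hp0 (Prod.ext h1 (by simpa [hkR.ne'] using h2))
  have ht1 : (1 : ℝ) ≤ p.2 := by
    have : (0 : ℝ) < t := ht ▸ pos_of_mul_pos_left hpos hkR.le
    rw [ht]
    exact_mod_cast (Int.cast_pos.1 this : 0 < t)
  have hN : (K : ℝ) ≤ p.2 * k := by
    have : (K : ℝ) ≤ k := by exact_mod_cast hk
    nlinarith
  obtain ⟨r, hrlat, hrant, hrint⟩ := hK p.1 hpx _ hN hpC'
  refine mem_add.2 ⟨(p.1 - r, p.2), ⟨fun i => ?_, sub_mem_latticePoints hpx hrlat, t, ht⟩,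
    (r, 0), ⟨fun i => ?_, hrlat, 0, by simp⟩, by simp⟩
  · have := hrint i
    show pairing (n i) (p.1 - r) > _
    push_cast
    linarith
  · simpa using hrant i

end NearlyGorenstein

theorem stmt_11 {d : ℕ} (hd : 1 ≤ d) (P : Set (Fin d → ℝ))
    (hP : IsLatticePolytope P) (hfull : (interior P).Nonempty)
    {m : ℕ} (n : Fin m → Fin d → ℤ) (h : Fin m → ℤ)
    (hpres : IsFacetPresentation P n h)
    (a : ℕ) (ha : IsCodegree P a)
    (hdecomp : P = floorPoly ((a : ℝ) • P) + remPoly n h a) :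
    ∃ K : ℕ, 1 ≤ K ∧ ∀ k : ℕ, K ≤ k → NearlyGorenstein ((k : ℝ) • P) := by
  have : Nonempty (Fin d) := ⟨⟨0, hd⟩⟩
  have hcpt := hP.isCompact
  obtain ⟨K, hK1, hK⟩ := exists_height_bound_interior_split hpres hcpt fun T z hz hzT =>
    exists_latticePoint_pairing_eq_neg_one hP hpres ha.1 hdecomp hz hzT
  refine ⟨K, hK1, fun k hk => ⟨m, n, _, hpres.smul (by omega), ?_⟩⟩
  exact ngIncl_smul_of_height_bound hpres.1 hcpt.isBounded
    (nontrivial_of_nonempty_interior hfull) hK (by omega) hk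
end

section
/- Let P ⊆ ℝ^d be a full-dimensional (0,1)-polytope. Then there exist a permutation σ of the coordinates of ℝ^d, positive integers d_1, …, d_s with d_1 + ⋯ + d_s = d, and Minkowski indecomposable full-dimensional (0,1)-polytopes P_i ⊆ ℝ^{d_i} (i = 1, …, s) such that the image of P under the coordinate permutation σ equals the direct product P_1 × ⋯ × P_s. -/
open Set Pointwise

/-!
If `P = P₁ + P₂` is a nontrivial splitting of a `(0,1)`-polytope into lattice polytopes, then in
every coordinate one of the summands is constant: the coordinate ranges of `P₁` and `P₂` are
integral intervals whose lengths add up to at most `1`. Splitting the coordinates according to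
which summand varies exhibits `P` as the product of its two coordinate projections, which are again
full-dimensional `(0,1)`-polytopes of smaller dimension; induction on `d` finishes the proof.
-/

theorem Set.add_eq_preimage_image_inter_preimage_image {E F G 𝓕 𝓖 : Type*}
    [Add E] [Add F] [Add G] [FunLike 𝓕 E F] [AddHomClass 𝓕 E F] [FunLike 𝓖 E G]
    [AddHomClass 𝓖 E G] (f : 𝓕) (g : 𝓖)
    (hfg : ∀ x y, f x = f y → g x = g y → x = y) {P₁ P₂ : Set E}
    (h₁ : (g '' P₁).Subsingleton) (h₂ : (f '' P₂).Subsingleton) :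
    P₁ + P₂ = f ⁻¹' (f '' (P₁ + P₂)) ∩ g ⁻¹' (g '' (P₁ + P₂)) := by
  refine subset_antisymm (subset_inter (subset_preimage_image _ _) (subset_preimage_image _ _)) ?_
  rintro x ⟨⟨_, ⟨p₁, hp₁, p₂, hp₂, rfl⟩, hfx⟩, ⟨_, ⟨q₁, hq₁, q₂, hq₂, rfl⟩, hgx⟩⟩
  refine ⟨p₁, hp₁, q₂, hq₂, hfg _ _ ?_ ?_⟩
  · rw [map_add, ← hfx, map_add, h₂ (mem_image_of_mem f hq₂) (mem_image_of_mem f hp₂)]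
  · rw [map_add, ← hgx, map_add, h₁ (mem_image_of_mem g hp₁) (mem_image_of_mem g hq₁)]

theorem Set.subsingleton_of_forall_eval {ι : Type*} {α : ι → Type*} {s : Set (∀ i, α i)}
    (h : ∀ i, (Function.eval i '' s).Subsingleton) : s.Subsingleton :=
  fun _ hx _ hy => funext fun i => h i (mem_image_of_mem _ hx) (mem_image_of_mem _ hy)

theorem Set.Nonempty.interior_image_of_surjective {E F : Type*} [NormedAddCommGroup E]
    [NormedSpace ℝ E] [NormedAddCommGroup F] [NormedSpace ℝ F] [FiniteDimensional ℝ F]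
    {f : E →ₗ[ℝ] F} (hf : Function.Surjective f) {s : Set E} (hs : (interior s).Nonempty) :
    (interior (f '' s)).Nonempty :=
  (hs.image f).mono ((f.isOpenMap_of_finiteDimensional hf).image_interior_subset s)

theorem subsingleton_or_subsingleton_of_add_subset_unitInterval {S T : Set ℝ}
    (hS : S ⊆ range ((↑) : ℤ → ℝ)) (hT : T ⊆ range ((↑) : ℤ → ℝ)) (h : S + T ⊆ unitInterval) :
    S.Subsingleton ∨ T.Subsingleton := by
  by_contra! hST
  obtain ⟨s, hs, s', hs', hss'⟩ := hST.1.exists_lt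
  obtain ⟨t, ht, t', ht', htt'⟩ := hST.2.exists_lt
  obtain ⟨⟨m, rfl⟩, ⟨m', rfl⟩⟩ := And.intro (hS hs) (hS hs')
  obtain ⟨⟨n, rfl⟩, ⟨n', rfl⟩⟩ := And.intro (hT ht) (hT ht')
  have hm : (m : ℝ) + 1 ≤ m' := by exact_mod_cast Int.add_one_le_of_lt (by exact_mod_cast hss')
  have hn : (n : ℝ) + 1 ≤ n' := by exact_mod_cast Int.add_one_le_of_lt (by exact_mod_cast htt')
  have h₀ := (h (add_mem_add hs ht)).1
  have h₁ := (h (add_mem_add hs' ht')).2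
  linarith

namespace Is01Polytope

variable {d : ℕ} {P : Set (Fin d → ℝ)}

theorem subset_pi_unitInterval (hP : Is01Polytope P) : P ⊆ univ.pi fun _ => unitInterval := by
  obtain ⟨V, hV, rfl⟩ := hP
  refine convexHull_min (fun v hv i _ => ?_) (convex_pi fun _ _ => convex_Icc 0 1)
  rcases hV v hv i with h | h <;> simp [h]

theorem image_funLeft {k : ℕ} (hP : Is01Polytope P) (f : Fin k → Fin d) :
    Is01Polytope (LinearMap.funLeft ℝ ℝ f '' P) := by
  classical
  obtain ⟨V, hV, rfl⟩ := hP
  refine ⟨V.image (LinearMap.funLeft ℝ ℝ f), ?_, ?_⟩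
  · simp only [Finset.mem_image]
    rintro _ ⟨v, hv, rfl⟩ i
    exact hV v hv (f i)
  · rw [Finset.coe_image, LinearMap.image_convexHull]

theorem eval_subsingleton_or {P₁ P₂ : Set (Fin d → ℝ)} (hP : Is01Polytope P)
    (h₁ : IsLatticePolytope P₁) (h₂ : IsLatticePolytope P₂) (hsum : P = P₁ + P₂) (i : Fin d) :
    (Function.eval i '' P₁).Subsingleton ∨ (Function.eval i '' P₂).Subsingleton := by
  obtain ⟨V₁, hV₁, rfl⟩ := h₁
  obtain ⟨V₂, hV₂, rfl⟩ := h₂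
  have hull_subsingleton {V : Set (Fin d → ℝ)} (hV : (Function.eval i '' V).Subsingleton) :
      (Function.eval i '' convexHull ℝ V).Subsingleton := by
    rw [← LinearMap.coe_proj (R := ℝ), LinearMap.image_convexHull, LinearMap.coe_proj,
      hV.convex.convexHull_eq]
    exact hV
  refine (subsingleton_or_subsingleton_of_add_subset_unitInterval ?_ ?_ ?_).imp
    hull_subsingleton hull_subsingleton
  · rintro _ ⟨v, hv, rfl⟩
    obtain ⟨z, hz⟩ := hV₁ hv i
    exact ⟨z, hz.symm⟩
  · rintro _ ⟨v, hv, rfl⟩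
    obtain ⟨z, hz⟩ := hV₂ hv i
    exact ⟨z, hz.symm⟩
  · rintro _ ⟨_, ⟨v, hv, rfl⟩, _, ⟨w, hw, rfl⟩, rfl⟩
    have hvw : v + w ∈ P := hsum ▸ add_mem_add (subset_convexHull ℝ _ hv)
      (subset_convexHull ℝ _ hw)
    exact hP.subset_pi_unitInterval hvw i (mem_univ i)

theorem exists_splitting (hP : Is01Polytope P) (hne : P.Nonempty) {P₁ P₂ : Set (Fin d → ℝ)}
    (hL₁ : IsLatticePolytope P₁) (hL₂ : IsLatticePolytope P₂) (hsum : P = P₁ + P₂)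
    (hpt₁ : ¬ ∃ p, P₁ = {p}) (hpt₂ : ¬ ∃ p, P₂ = {p}) :
    ∃ (k l : ℕ) (e : Fin k ⊕ Fin l ≃ Fin d), 0 < k ∧ 0 < l ∧
      P = LinearMap.funLeft ℝ ℝ (e ∘ Sum.inl) ⁻¹' (LinearMap.funLeft ℝ ℝ (e ∘ Sum.inl) '' P) ∩
        LinearMap.funLeft ℝ ℝ (e ∘ Sum.inr) ⁻¹' (LinearMap.funLeft ℝ ℝ (e ∘ Sum.inr) '' P) := by
  classical
  subst hsum
  obtain ⟨p₁, hp₁⟩ := hne.of_add_left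
  obtain ⟨p₂, hp₂⟩ := hne.of_add_right
  set A := Finset.univ.filter fun i => ¬ (Function.eval i '' P₁).Subsingleton
  have hA₁ : ∀ i ∉ A, (Function.eval i '' P₁).Subsingleton := by simp [A]
  have hA₂ : ∀ i ∈ A, (Function.eval i '' P₂).Subsingleton := fun i hi =>
    (hP.eval_subsingleton_or hL₁ hL₂ rfl i).resolve_left (Finset.mem_filter.mp hi).2
  set e := finSumEquivOfFinset (s := A) rfl rfl
  have he₁ (j) : e (.inl j) ∈ A := Finset.orderEmbOfFin_mem _ rfl j
  have he₂ (j) : e (.inr j) ∉ A := Finset.mem_compl.mp (Finset.orderEmbOfFin_mem _ rfl j)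
  refine ⟨_, _, e, Finset.card_pos.mpr ?_, Finset.card_pos.mpr ?_,
    Set.add_eq_preimage_image_inter_preimage_image _ _ ?_ ?_ ?_⟩
  · by_contra! hA
    refine hpt₁ ⟨p₁, (subsingleton_iff_singleton hp₁).mp ?_⟩
    exact subsingleton_of_forall_eval fun i => hA₁ i (by simp [hA])
  · by_contra! hA
    refine hpt₂ ⟨p₂, (subsingleton_iff_singleton hp₂).mp ?_⟩
    have hA : A = Finset.univ := (Finset.compl_eq_empty_iff A).mp hA
    exact subsingleton_of_forall_eval fun i => hA₂ i (by simp [hA])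
  · intro x y hl hr
    funext i
    obtain ⟨j | j, rfl⟩ := e.surjective i
    exacts [congrFun hl j, congrFun hr j]
  · rintro _ ⟨x, hx, rfl⟩ _ ⟨y, hy, rfl⟩
    exact funext fun j => hA₁ _ (he₂ j) (mem_image_of_mem _ hx) (mem_image_of_mem _ hy)
  · rintro _ ⟨x, hx, rfl⟩ _ ⟨y, hy, rfl⟩
    exact funext fun j => hA₂ _ (he₁ j) (mem_image_of_mem _ hx) (mem_image_of_mem _ hy)

end Is01Polytope

def IsProductOfIndecomposables {d : ℕ} (P : Set (Fin d → ℝ)) : Prop :=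
  ∃ (ι : Type) (_ : Finite ι) (dims : ι → ℕ) (e : Fin d ≃ Σ i, Fin (dims i))
    (Q : ∀ i, Set (Fin (dims i) → ℝ)),
    (∀ i, 0 < dims i ∧ Is01Polytope (Q i) ∧ (interior (Q i)).Nonempty ∧
      IsIndecomposable (Q i)) ∧
    P = {x | ∀ i, (fun j => x (e.symm ⟨i, j⟩)) ∈ Q i}

namespace IsProductOfIndecomposables

theorem of_isIndecomposable {d : ℕ} (hd : 0 < d) {P : Set (Fin d → ℝ)} (hP : Is01Polytope P)
    (hfull : (interior P).Nonempty) (hind : IsIndecomposable P) : IsProductOfIndecomposables P :=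
  ⟨Unit, inferInstance, fun _ => d, (Equiv.uniqueSigma fun _ => Fin d).symm, fun _ => P,
    fun _ => ⟨hd, hP, hfull, hind⟩, by ext; simp [Equiv.uniqueSigma]⟩

theorem preimage_inter {k l d : ℕ} (e : Fin k ⊕ Fin l ≃ Fin d) {R₁ : Set (Fin k → ℝ)}
    {R₂ : Set (Fin l → ℝ)} (h₁ : IsProductOfIndecomposables R₁)
    (h₂ : IsProductOfIndecomposables R₂) :
    IsProductOfIndecomposables (LinearMap.funLeft ℝ ℝ (e ∘ Sum.inl) ⁻¹' R₁ ∩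
      LinearMap.funLeft ℝ ℝ (e ∘ Sum.inr) ⁻¹' R₂) := by
  obtain ⟨ι₁, _, d₁, e₁, Q₁, hQ₁, rfl⟩ := h₁
  obtain ⟨ι₂, _, d₂, e₂, Q₂, hQ₂, rfl⟩ := h₂
  refine ⟨ι₁ ⊕ ι₂, inferInstance, Sum.elim d₁ d₂,
    e.symm.trans ((e₁.sumCongr e₂).trans
      (Equiv.sumSigmaDistrib fun t => Fin (Sum.elim d₁ d₂ t)).symm),
    fun | .inl i => Q₁ i | .inr i => Q₂ i, Sum.forall.mpr ⟨hQ₁, hQ₂⟩, ?_⟩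
  ext x
  simp only [mem_inter_iff, mem_preimage, mem_ofPred_eq, Sum.forall]
  rfl

end IsProductOfIndecomposables

theorem Is01Polytope.isProductOfIndecomposables {d : ℕ} (hd : 0 < d) {P : Set (Fin d → ℝ)}
    (hP : Is01Polytope P) (hfull : (interior P).Nonempty) : IsProductOfIndecomposables P := by
  induction d using Nat.strong_induction_on with
  | _ d ih =>
  have : Nonempty (Fin d) := ⟨⟨0, hd⟩⟩
  have hpt : ¬ ∃ p, P = {p} := by
    rintro ⟨p, rfl⟩
    simp at hfull
  by_cases hind : IsIndecomposable P
  · exact .of_isIndecomposable hd hP hfull hind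
  obtain ⟨P₁, P₂, hL₁, hL₂, hsum, hpt₁, hpt₂⟩ : ∃ P₁ P₂, IsLatticePolytope P₁ ∧
      IsLatticePolytope P₂ ∧ P = P₁ + P₂ ∧ (¬ ∃ p, P₁ = {p}) ∧ ¬ ∃ p, P₂ = {p} := by
    simpa [IsIndecomposable, hpt] using hind
  obtain ⟨k, l, e, hk, hl, hsplit⟩ :=
    hP.exists_splitting (hfull.mono interior_subset) hL₁ hL₂ hsum hpt₁ hpt₂
  have hkl : k + l = d := by simpa using Fintype.card_congr e
  have factor {m} (hmd : m < d) (hm : 0 < m) (f : Fin m → Fin d) (hf : f.Injective) :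
      IsProductOfIndecomposables (LinearMap.funLeft ℝ ℝ f '' P) :=
    ih m hmd hm (hP.image_funLeft f)
      (hfull.interior_image_of_surjective (LinearMap.funLeft_surjective_of_injective _ _ f hf))
  rw [hsplit]
  exact .preimage_inter e (factor (by omega) hk _ (e.injective.comp Sum.inl_injective))
    (factor (by omega) hl _ (e.injective.comp Sum.inr_injective))

theorem stmt_17 {d : ℕ} (hd : 1 ≤ d) (P : Set (Fin d → ℝ))
    (hP : Is01Polytope P) (hfull : (interior P).Nonempty) :
    ∃ (s : ℕ) (dims : Fin s → ℕ) (e : Fin d ≃ (Σ i : Fin s, Fin (dims i)))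
      (Q : ∀ i : Fin s, Set (Fin (dims i) → ℝ)),
      1 ≤ s ∧ (∀ i, 1 ≤ dims i) ∧ (∑ i, dims i = d) ∧
      (∀ i, Is01Polytope (Q i) ∧ (interior (Q i)).Nonempty ∧
        IsIndecomposable (Q i)) ∧
      (fun (x : Fin d → ℝ) => x ∘ e.symm) '' P =
        {y : (Σ i : Fin s, Fin (dims i)) → ℝ | ∀ i, (fun j => y ⟨i, j⟩) ∈ Q i} := by
  obtain ⟨ι, _, dims, e, Q, hQ, rfl⟩ := hP.isProductOfIndecomposables hd hfull
  have := Fintype.ofFinite ι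
  set w := (Fintype.equivFin ι).symm
  set e' := e.trans (Equiv.sigmaCongrLeft w).symm
  refine ⟨_, dims ∘ w, e', fun a => Q (w a), Fintype.card_pos_iff.mpr ⟨(e ⟨0, hd⟩).1⟩,
    fun a => (hQ (w a)).1, by simpa using (Fintype.card_congr e').symm,
    fun a => (hQ (w a)).2, ?_⟩
  ext y
  constructor
  · rintro ⟨x, hx, rfl⟩ a
    exact hx (w a)
  · intro hy
    refine ⟨y ∘ e', fun i => ?_, by ext; simp⟩
    obtain ⟨a, rfl⟩ := w.surjective i
    have hcomp : (fun j => y (e' (e.symm ⟨w a, j⟩))) = fun j => y ⟨a, j⟩ :=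
      funext fun j => congrArg y (e'.apply_symm_apply ⟨a, j⟩)
    exact hcomp ▸ hy a
end
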